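/- Equivalent form of the characterization via paths: the problem is rationalizable if and only if for all same-type individuals a, b such that there exists a directed path from a to b in G^big, μ(a) = μ(b). -/

import Mathlib

/-- Arc of the allocation graph G^big: `(a,b)` is an arc iff `μ a = μE b`. -/
def arcBig {A H : Type*} (μE μ : A → H) (a b : A) : Prop := μ a = μE b

/-- Two agents lie in the same strongly connected component of G^big. -/
def sameSCC {A H : Type*} (μE μ : A → H) (a b : A) : Prop :=
  Relation.ReflTransGen (arcBig μE μ) a b ∧ Relation.ReflTransGen (arcBig μE μ) b a

/-- For each house type, the number of agents allocated it equals the number endowed with it. -/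
def BalancedAlloc {A H : Type*} (μE μ : A → H) : Prop :=
  ∀ h : H, Nat.card {a : A // μ a = h} = Nat.card {a : A // μE a = h}

/-- A directed cycle: a nonempty list of distinct vertices with consecutive arcs,
and an arc from the last vertex back to the first. A single vertex with a
self-loop is a cycle of length 1. -/
def IsCycle {V : Type*} (R : V → V → Prop) (l : List V) : Prop :=
  l ≠ [] ∧ l.Nodup ∧ l.Chain' R ∧ ∀ h : l ≠ [], R (l.getLast h) (l.head h)

/-- A blocking coalition: a nonempty coalition `C` and a reallocation `μ'` of its
own endowments (as multisets) making every member weakly better off and at least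
one member strictly better off, w.r.t. the strict type-preference profile `P`. -/
def Blocking {A H T : Type*} (tp : A → T) (μE μ : A → H)
    (P : T → LinearOrder H) : Prop :=
  ∃ (C : Finset A) (μ' : A → H),
    C.Nonempty ∧
    C.val.map μ' = C.val.map μE ∧
    (∀ a ∈ C, (P (tp a)).le (μ a) (μ' a)) ∧
    (∃ a ∈ C, (P (tp a)).lt (μ a) (μ' a))

/-- The allocation `μ` is rationalizable: some strict type-preference profile places
it in the strong core (no blocking coalition). -/
def Rationalizable {A H T : Type*} (tp : A → T) (μE μ : A → H) : Prop :=
  ∃ P : T → LinearOrder H, ¬ Blocking tp μE μ P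


/-!
Balance yields a permutation `σ` of the agents with `μE ∘ σ = μ`. Every agent `x` then has an arc
to `σ x`, and since `σ` has finite order `x` also reaches `σ⁻¹ x`. Hence an arc `a → b` closes
into the cycle `b ⇝ σ⁻¹ b → σ a ⇝ a`, and reachability in G^big is an equivalence relation.

If some profile admits no blocking coalition, every agent weakly prefers its own house to the
house of any agent reaching it, because a simple path from `b` to `a` closes into a trading cycle
in which `a` receives `μ b`. Two agents of the same type in one component therefore rank each
other's houses both ways, so they hold the same house.

Conversely, let `g` index the component of a house (of its holders and its endowers alike), and
let every type rank houses first by `g`, then the houses held by agents of that type above the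
others. A blocking coalition redistributes its endowments, so it preserves the sum of `g` over its
members; as nobody may move to a lower `g`, everybody stays in their component, where by
hypothesis their own house is the only one held by their type, hence their favourite.
-/

theorem Relation.TransGen.exists_nodup_isChain {α : Type*} {r : α → α → Prop} {a b : α}
    (h : Relation.TransGen r a b) :
    ∃ l : List α, (a :: (l ++ [b])).IsChain r ∧ (l ++ [b]).Nodup := by
  induction h with
  | single hab => exact ⟨[], by simpa using hab, by simp⟩
  | @tail c b _ hcb ih =>
    obtain ⟨l, hchain, hnodup⟩ := ih
    by_cases hb : b ∈ l ++ [c]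
    · obtain ⟨s, t, hst⟩ := List.append_of_mem hb
      rw [hst] at hchain hnodup
      exact ⟨s, hchain.prefix ⟨t, by simp⟩, hnodup.sublist (by simp)⟩
    · refine ⟨l ++ [c], ?_, List.nodup_append.2 ⟨hnodup, by simp, fun x hx y hy => ?_⟩⟩
      · have := hchain.append (List.IsChain.singleton b) (by simp [List.getLast?_cons, hcb])
        rwa [List.cons_append] at this
      · rw [List.mem_singleton.1 hy]
        rintro rfl
        exact hb hx

theorem List.map_eq_map_of_isChain {α β : Type*} {f g : α → β} {a b : α} {l : List α}
    (h : (a :: (l ++ [b])).IsChain fun u v => f u = g v) : (a :: l).map f = (l ++ [b]).map g := by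
  rw [← List.cons_append, List.isChain_cons_append_singleton_iff_forall₂] at h
  rwa [← List.forall₂_eq_eq_eq, List.forall₂_map_left_iff, List.forall₂_map_right_iff]

theorem Equiv.Perm.reflTransGen_inv_apply {α : Type*} [Finite α] {r : α → α → Prop}
    (σ : Equiv.Perm α) (hσ : ∀ x, r x (σ x)) (x : α) : Relation.ReflTransGen r x (σ⁻¹ x) := by
  have hpow (n : ℕ) : Relation.ReflTransGen r x ((σ ^ n) x) := by
    induction n with
    | zero => exact .refl
    | succ n ih =>
      rw [pow_succ', Equiv.Perm.mul_apply]
      exact ih.tail (hσ _)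
  obtain ⟨n, hn⟩ := (Submonoid.mem_powers_iff _ _).1 <|
    mem_powers_iff_mem_zpowers.2 (inv_mem (Subgroup.mem_zpowers σ))
  exact hn ▸ hpow n

theorem Equivalence.exists_nat_index {α : Type*} [Countable α] {r : α → α → Prop}
    (hr : Equivalence r) : ∃ κ : α → ℕ, ∀ a b, κ a = κ b ↔ r a b := by
  let s : Setoid α := ⟨r, hr⟩
  obtain ⟨f, hf⟩ := Countable.exists_injective_nat (Quotient s)
  exact ⟨fun a => f ⟦a⟧, fun a b => hf.eq_iff.trans Quotient.eq⟩

section Allocation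

open Relation

variable {A H T : Type*} {tp : A → T} {μE μ : A → H}

theorem BalancedAlloc.exists_perm [Finite A] (hbal : BalancedAlloc μE μ) :
    ∃ σ : Equiv.Perm A, ∀ a, μE (σ a) = μ a :=
  ⟨Equiv.ofFiberEquiv fun h => (Finite.card_eq.1 (hbal h)).some, Equiv.ofFiberEquiv_map _⟩

theorem BalancedAlloc.reflTransGen_of_arcBig [Finite A] (hbal : BalancedAlloc μE μ) {a b : A}
    (hab : arcBig μE μ a b) : ReflTransGen (arcBig μE μ) b a := by
  obtain ⟨σ, hσ⟩ := hbal.exists_perm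
  have hcycle := σ.reflTransGen_inv_apply (r := arcBig μE μ) fun x => (hσ x).symm
  have hjump : arcBig μE μ (σ⁻¹ b) (σ a) := by
    rw [arcBig, ← hσ, Equiv.Perm.coe_inv, Equiv.apply_symm_apply, ← hab, hσ]
  simpa using ((hcycle b).tail hjump).trans (hcycle (σ a))

theorem BalancedAlloc.reflTransGen_symm [Finite A] (hbal : BalancedAlloc μE μ) {a b : A}
    (h : ReflTransGen (arcBig μE μ) a b) : ReflTransGen (arcBig μE μ) b a := by
  induction h with
  | refl => exact .refl
  | tail _ hcb ih => exact (hbal.reflTransGen_of_arcBig hcb).trans ih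

theorem BalancedAlloc.equivalence_reflTransGen [Finite A] (hbal : BalancedAlloc μE μ) :
    Equivalence (ReflTransGen (arcBig μE μ)) :=
  ⟨fun _ => .refl, hbal.reflTransGen_symm, .trans⟩

theorem BalancedAlloc.exists_sccIndex [Finite A] (hbal : BalancedAlloc μE μ) :
    ∃ g : H → ℕ, (∀ a, g (μE a) = g (μ a)) ∧
      ∀ a b, g (μ a) = g (μ b) → ReflTransGen (arcBig μE μ) a b := by
  obtain ⟨σ, hσ⟩ := hbal.exists_perm
  obtain ⟨κ, hκ⟩ := hbal.equivalence_reflTransGen.exists_nat_index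
  have hκμE : Function.FactorsThrough κ μE := fun a b hab => by
    have hsrc : μ (σ⁻¹ a) = μE a := by rw [← hσ, Equiv.Perm.coe_inv, Equiv.apply_symm_apply]
    exact (hκ a b).2 <| (hbal.reflTransGen_of_arcBig hsrc).tail (hsrc.trans hab)
  have hgμE := hκμE.extend_apply 0
  have hgμ (a : A) : Function.extend μE κ 0 (μ a) = κ a := by
    rw [← hσ, hgμE, hκ]
    exact hbal.reflTransGen_of_arcBig (hσ a).symm
  refine ⟨Function.extend μE κ 0, fun a => by rw [hgμE, hgμ], fun a b hab => ?_⟩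
  rwa [hgμ, hgμ, hκ] at hab

theorem le_of_not_blocking {P : T → LinearOrder H} (hP : ¬Blocking tp μE μ P) {a b : A}
    (hba : ReflTransGen (arcBig μE μ) b a) : (P (tp a)).le (μ b) (μ a) := by
  classical
  let _ := P (tp a)
  by_contra! hlt
  obtain rfl | hba := reflTransGen_iff_eq_or_transGen.1 hba
  · exact hlt.false
  obtain ⟨l, hchain, hnodup⟩ := hba.exists_nodup_isChain
  have ha : a ∉ l := (List.nodup_cons.1 (List.nodup_append_comm.1 hnodup)).1
  set μ' := Function.update μ a (μ b)
  have hμ' : (l ++ [a]).map μ' = l.map μ ++ [μ b] := by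
    rw [List.map_append, List.map_congr_left fun x hx =>
      Function.update_of_ne (ne_of_mem_of_not_mem hx ha) _ _]
    simp [μ']
  refine hP ⟨(l ++ [a]).toFinset, μ', ⟨a, by simp⟩, ?_, fun x hx => ?_, ⟨a, by simp, ?_⟩⟩
  · rw [List.toFinset_val, hnodup.dedup, Multiset.map_coe, Multiset.map_coe, Multiset.coe_eq_coe,
      hμ', ← List.map_eq_map_of_isChain hchain]
    exact List.perm_append_singleton _ _
  · obtain rfl | hxa := eq_or_ne x a
    · simpa [μ'] using hlt.le
    · simpa [μ', hxa] using (P (tp x)).le_refl (μ x)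
  · simpa [μ'] using hlt

theorem not_blocking_of_potential {P : T → LinearOrder H} (g : H → ℕ)
    (hg : ∀ a, g (μE a) = g (μ a)) (hP : ∀ a h, (P (tp a)).lt (μ a) h → g (μ a) < g h) :
    ¬Blocking tp μE μ P := by
  rintro ⟨C, μ', -, hmap, hle, a₀, ha₀, hlt⟩
  have hmono : ∀ a ∈ C, g (μ a) ≤ g (μ' a) := fun a ha => by
    let _ := P (tp a)
    obtain heq | hlt := (hle a ha).eq_or_lt
    · rw [heq]
    · exact (hP a _ hlt).le
  have hsum : ∑ a ∈ C, g (μ' a) = ∑ a ∈ C, g (μ a) := by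
    have := congrArg (fun m => (m.map g).sum) hmap
    simp only [Multiset.map_map, Function.comp_def, hg] at this
    simpa only [Finset.sum_eq_multiset_sum] using this
  exact (Finset.sum_lt_sum hmono ⟨a₀, ha₀, hP a₀ _ hlt⟩).ne' hsum

theorem rationalizable_of_potential (g : H → ℕ) (hg : ∀ a, g (μE a) = g (μ a))
    (hsep : ∀ a b, tp a = tp b → g (μ a) = g (μ b) → μ a = μ b) : Rationalizable tp μE μ := by
  classical
  let key (t : T) (h : H) : ℕ ×ₗ Bool ×ₗ Cardinal :=
    toLex (g h, toLex (decide (∃ c, tp c = t ∧ μ c = h), embeddingToCardinal h))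
  have hkey (t : T) : Function.Injective (key t) := fun _ _ h =>
    embeddingToCardinal.injective (congrArg (fun k => (ofLex (ofLex k).2).2) h)
  refine ⟨fun t => LinearOrder.lift' (key t) (hkey t),
    not_blocking_of_potential g hg fun a h hlt => ?_⟩
  change key (tp a) (μ a) < key (tp a) h at hlt
  have hown : decide (∃ c, tp c = tp a ∧ μ c = μ a) = true := decide_eq_true ⟨a, rfl, rfl⟩
  obtain hlt | ⟨hgh, hlt⟩ := Prod.Lex.toLex_lt_toLex.1 hlt
  · exact hlt
  obtain hlt | ⟨hheld, hlt⟩ := Prod.Lex.toLex_lt_toLex.1 hlt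
  · rw [hown] at hlt
    exact absurd hlt (not_lt.2 (Bool.le_true _))
  obtain ⟨c, hc, rfl⟩ := of_decide_eq_true (hheld.symm.trans hown)
  rw [hsep c a hc hgh.symm] at hlt
  exact (lt_irrefl _ hlt).elim

end Allocation

theorem stmt12_general {A H T : Type*} [Fintype A] (tp : A → T)
    (μE μ : A → H) (hbal : BalancedAlloc μE μ) :
    Rationalizable tp μE μ ↔
      ∀ a b : A, tp a = tp b → Relation.ReflTransGen (arcBig μE μ) a b → μ a = μ b := by
  constructor
  · rintro ⟨P, hP⟩ a b htp hab
    let _ := P (tp a)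
    have hle_ba : μ b ≤ μ a := le_of_not_blocking hP (hbal.reflTransGen_symm hab)
    have hle_ab : (P (tp b)).le (μ a) (μ b) := le_of_not_blocking hP hab
    rw [← htp] at hle_ab
    exact le_antisymm hle_ab hle_ba
  · intro hsame
    obtain ⟨g, hg, hsep⟩ := hbal.exists_sccIndex
    exact rationalizable_of_potential g hg fun a b htp hgab => hsame a b htp (hsep a b hgab)

/-- path form: the problem is rationalizable iff any two same-type
agents connected by a directed path in G^big receive the same house type. -/
theorem stmt12 {A H T : Type*} [Fintype A] [Fintype H] (tp : A → T)
    (μE μ : A → H) (hbal : BalancedAlloc μE μ) :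
    Rationalizable tp μE μ ↔
      ∀ a b : A, tp a = tp b → Relation.ReflTransGen (arcBig μE μ) a b → μ a = μ b :=
  stmt12_general tp μE μ hbal
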